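/- arXiv:1301.7736 — 7 statements merged into one kernel-verified Lean document; each statement's English description precedes it below -/
import Mathlib

section
/- Let 0 < τ < π, and set m = sin(τ)/τ and k = (2/τ)·tan(τ/2). Then the kick-move-kick product of 2×2 real matrices [[1,0],[−kτ/2,1]] · [[1, mτ],[0,1]] · [[1,0],[−kτ/2,1]] equals the rotation matrix [[cos τ, sin τ],[−sin τ, cos τ]]. (I.e., the symmetric splitting scheme with modified kinetic coefficient m and modified stiffness k reproduces the exact time-τ flow of the harmonic oscillator H = (p² + q²)/2.) -/
/-!
With `a = tan (τ / 2)` and `b = m τ = sin τ`, the symmetric product `K(a) M(b) K(a)` has diagonal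
`1 - a b` and off-diagonal entries `b` and `-(2a - a² b)`. Since `tan θ · sin 2θ = 2 sin² θ`, these
are `cos 2θ`, `sin 2θ` and `-sin 2θ` for `θ = τ / 2`.
-/

open Real

theorem Matrix.kick_mul_move_mul_kick {R : Type*} [CommRing R] (a b : R) :
    !![1, 0; -a, 1] * !![1, b; 0, 1] * !![1, 0; -a, 1]
      = !![1 - a * b, b; -(2 * a - a ^ 2 * b), 1 - a * b] := by
  rw [Matrix.mul_fin_two, Matrix.mul_fin_two]
  ext i j
  fin_cases i <;> fin_cases j <;> simp <;> ring

namespace Real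

theorem tan_mul_sin_two_mul {θ : ℝ} (hθ : cos θ ≠ 0) : tan θ * sin (2 * θ) = 2 * sin θ ^ 2 := by
  rw [tan_eq_sin_div_cos, sin_two_mul]
  field_simp

theorem one_sub_tan_mul_sin_two_mul {θ : ℝ} (hθ : cos θ ≠ 0) :
    1 - tan θ * sin (2 * θ) = cos (2 * θ) := by
  rw [tan_mul_sin_two_mul hθ, cos_two_mul, cos_sq']
  ring

theorem two_mul_tan_sub_tan_sq_mul_sin_two_mul {θ : ℝ} (hθ : cos θ ≠ 0) :
    2 * tan θ - tan θ ^ 2 * sin (2 * θ) = sin (2 * θ) := by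
  calc 2 * tan θ - tan θ ^ 2 * sin (2 * θ) = tan θ * (2 - 2 * sin θ ^ 2) := by
        rw [← tan_mul_sin_two_mul hθ]; ring
    _ = sin θ / cos θ * (2 * cos θ ^ 2) := by rw [cos_sq', tan_eq_sin_div_cos]; ring
    _ = sin (2 * θ) := by rw [sin_two_mul]; field_simp

end Real

theorem kick_move_kick_tan_eq_rotation {θ : ℝ} (hθ : cos θ ≠ 0) :
    !![1, 0; -tan θ, 1] * !![1, sin (2 * θ); 0, 1] * !![1, 0; -tan θ, 1]
      = !![cos (2 * θ), sin (2 * θ); -sin (2 * θ), cos (2 * θ)] := by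
  rw [Matrix.kick_mul_move_mul_kick, one_sub_tan_mul_sin_two_mul hθ,
    two_mul_tan_sub_tan_sq_mul_sin_two_mul hθ]

theorem kick_move_kick_harmonic_oscillator_exact
    (τ : ℝ) (h0 : 0 < τ) (hπ : τ < Real.pi)
    (m k : ℝ) (hm : m = Real.sin τ / τ) (hk : k = (2 / τ) * Real.tan (τ / 2)) :
    !![1, 0; -(k * τ / 2), 1] * !![1, m * τ; 0, 1] * !![1, 0; -(k * τ / 2), 1]
      = !![Real.cos τ, Real.sin τ; -Real.sin τ, Real.cos τ] := by
  have hmτ : m * τ = sin τ := by rw [hm, div_mul_cancel₀ _ h0.ne']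
  have hkτ : k * τ / 2 = tan (τ / 2) := by rw [hk]; field_simp
  have hcos : cos (τ / 2) ≠ 0 :=
    (cos_pos_of_mem_Ioo ⟨by linarith [pi_pos], by linarith⟩).ne'
  have hτ : 2 * (τ / 2) = τ := by ring
  rw [hmτ, hkτ]
  simpa only [hτ] using kick_move_kick_tan_eq_rotation hcos
end

section
/- Let 0 < τ < π, and set m = (2/τ)·tan(τ/2) and k = sin(τ)/τ. Then the move-kick-move product of 2×2 real matrices [[1, mτ/2],[0,1]] · [[1,0],[−kτ,1]] · [[1, mτ/2],[0,1]] equals the rotation matrix [[cos τ, sin τ],[−sin τ, cos τ]]. (I.e., interchanging the roles of kick and kinetic steps, the symmetric splitting with these modified coefficients reproduces the exact time-τ flow of the harmonic oscillator H = (p² + q²)/2.) -/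
/-! With `a = tan θ` and `b = sin 2θ`, the symmetric shear product
`[[1, a], [0, 1]] · [[1, 0], [-b, 1]] · [[1, a], [0, 1]] = [[1 - ab, 2a - a²b], [-b, 1 - ab]]`
has `1 - ab = 1 - 2 sin² θ = cos 2θ` and `2a - a²b = 2 tan θ cos² θ = sin 2θ`,
so it is the rotation by `2θ`; take `θ = τ / 2`. -/

open Real Matrix

theorem shear_mul_kick_mul_shear {R : Type*} [CommRing R] (a b : R) :
    !![1, a; 0, 1] * !![1, 0; -b, 1] * !![1, a; 0, 1]
      = !![1 - a * b, 2 * a - a ^ 2 * b; -b, 1 - a * b] := by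
  simp only [mul_fin_two]
  ring_nf

theorem Real.one_sub_tan_mul_sin_two_mul_s1 {θ : ℝ} (h : cos θ ≠ 0) :
    1 - tan θ * sin (2 * θ) = cos (2 * θ) := by
  rw [tan_eq_sin_div_cos, sin_two_mul, cos_two_mul_eq_one_sub]
  field_simp

theorem Real.two_mul_tan_sub_tan_sq_mul_sin_two_mul_s1 {θ : ℝ} (h : cos θ ≠ 0) :
    2 * tan θ - tan θ ^ 2 * sin (2 * θ) = sin (2 * θ) := by
  rw [tan_eq_sin_div_cos, sin_two_mul]
  field_simp
  linear_combination -sin θ * sin_sq_add_cos_sq θ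

theorem shear_tan_mul_kick_sin_mul_shear_tan {θ : ℝ} (h : cos θ ≠ 0) :
    !![1, tan θ; 0, 1] * !![1, 0; -sin (2 * θ), 1] * !![1, tan θ; 0, 1]
      = !![cos (2 * θ), sin (2 * θ); -sin (2 * θ), cos (2 * θ)] := by
  rw [shear_mul_kick_mul_shear, one_sub_tan_mul_sin_two_mul_s1 h,
    two_mul_tan_sub_tan_sq_mul_sin_two_mul_s1 h]

theorem move_kick_move_harmonic_oscillator_exact
    (τ : ℝ) (h0 : 0 < τ) (hπ : τ < Real.pi)
    (m k : ℝ) (hm : m = (2 / τ) * Real.tan (τ / 2)) (hk : k = Real.sin τ / τ) :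
    !![1, m * τ / 2; 0, 1] * !![1, 0; -(k * τ), 1] * !![1, m * τ / 2; 0, 1]
      = !![Real.cos τ, Real.sin τ; -Real.sin τ, Real.cos τ] := by
  have hcos : cos (τ / 2) ≠ 0 := (cos_pos_of_mem_Ioo ⟨by linarith, by linarith⟩).ne'
  have hmτ : m * τ / 2 = tan (τ / 2) := by
    rw [hm]
    field_simp
  have hkτ : k * τ = sin τ := by
    rw [hk, div_mul_cancel₀ _ h0.ne']
  rw [hmτ, hkτ]
  simpa only [mul_div_cancel₀ τ two_ne_zero] using shear_tan_mul_kick_sin_mul_shear_tan hcos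
end

section
/- Let A and B be n×n real matrices. Then, as τ → 0, exp(τB/2)·exp(τA)·exp(τB/2) − exp(τ(A+B) + (τ³/24)·(2[A,[A,B]] + [B,[A,B]])) = O(τ⁵), where exp is the matrix exponential and [X,Y] = XY − YX. In particular, the symmetric (Strang) splitting exp(τB/2)·exp(τA)·exp(τB/2) − exp(τ(A+B)) = O(τ³). -/
/-!
Replace `τ` by a central polynomial variable `X`. Each of the exponentials `exp (τ • x)` and
`exp (τ • d + τ ^ 3 • c)` agrees to order `N` at `τ = 0` with its truncated exponential series in
`A[X]`, agreement to order `N` is preserved by products, and a polynomial divisible by `X ^ N`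
evaluates to `O(τ ^ N)`. Both estimates thus reduce to comparing the coefficients of `X ^ 0, …, X ^ 4`
of explicit polynomials over `A`, a finite computation with noncommuting `a` and `b`. Matrices form
a Banach algebra under the `L∞` operator norm, which bounds every entry.
-/

open Polynomial Asymptotics Filter Topology
open scoped Nat

section Algebra

variable {A : Type*} [Ring A] [Algebra ℝ A]

noncomputable def expTrunc (N : ℕ) (x : A) : A :=
  ∑ k ∈ Finset.range N, (k !⁻¹ : ℝ) • x ^ k

theorem AlgHom.map_expTrunc {B : Type*} [Ring B] [Algebra ℝ B] (f : A →ₐ[ℝ] B) (N : ℕ) (x : A) :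
    f (expTrunc N x) = expTrunc N (f x) := by
  simp [expTrunc]

noncomputable def evalReal (τ : ℝ) : A[X] →ₐ[ℝ] A :=
  eval₂AlgHom (AlgHom.id ℝ A) (algebraMap ℝ A τ) fun a => Algebra.commute_algebraMap_right τ a

@[simp]
theorem evalReal_C (τ : ℝ) (a : A) : evalReal τ (C a) = a :=
  eval₂_C _ _

@[simp]
theorem evalReal_X (τ : ℝ) : evalReal τ (X : A[X]) = algebraMap ℝ A τ :=
  eval₂_X _ _

@[simp]
theorem evalReal_C_mul_X_pow (τ : ℝ) (a : A) (k : ℕ) : evalReal τ (C a * X ^ k) = τ ^ k • a := by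
  rw [map_mul, map_pow, evalReal_C, evalReal_X, ← map_pow, ← Algebra.commutes, Algebra.smul_def]

@[simp]
theorem evalReal_C_mul_X (τ : ℝ) (a : A) : evalReal τ (C a * X) = τ • a := by
  simpa using evalReal_C_mul_X_pow τ a 1

theorem coeff_expTrunc_C_mul_X (N : ℕ) (a : A) (d : ℕ) :
    (expTrunc N (C a * X)).coeff d = if d < N then (d !⁻¹ : ℝ) • a ^ d else 0 := by
  simp only [expTrunc, (commute_X (C a)).symm.mul_pow, ← C_pow, finsetSum_coeff, coeff_smul,
    coeff_C_mul_X_pow]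
  split_ifs with h
  · rw [Finset.sum_eq_single d] <;> simp_all [eq_comm]
  · exact Finset.sum_eq_zero fun k hk => by
      simp only [Finset.mem_range] at hk
      simp only [ite_eq_right_iff, smul_eq_zero]
      omega

theorem X_pow_five_dvd_expTrunc_add_sub (d c : A) :
    X ^ 5 ∣ expTrunc 5 (C d * X + C c * X ^ 3) -
      (expTrunc 5 (C d * X) + (C c * X ^ 3 + C ((2 : ℝ)⁻¹ • (d * c + c * d)) * X ^ 4)) := by
  -- `p` is made opaque so that `coeff_mul` expands only the powers of `p`.
  set p : A[X] := C d * X + C c * X ^ 3 with hp_def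
  have hp : ∀ i, p.coeff i = (if i = 1 then d else 0) + if i = 3 then c else 0 := fun i => by
    simp only [hp_def, coeff_add, coeff_C_mul_X, coeff_C_mul_X_pow]
  clear_value p
  rw [X_pow_dvd_iff]
  intro j hj
  rw [coeff_sub, sub_eq_zero]
  simp only [coeff_add, coeff_expTrunc_C_mul_X, coeff_C_mul_X_pow, hj, if_true]
  interval_cases j <;>
    simp [expTrunc, Finset.sum_range_succ, pow_succ, coeff_mul, hp, coeff_one,
      Finset.Nat.sum_antidiagonal_eq_sum_range_succ_mk, Nat.factorial, mul_add, add_mul, smul_add] <;>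
    abel

noncomputable def strangPoly (N : ℕ) (a b : A) : A[X] :=
  expTrunc N (C ((2 : ℝ)⁻¹ • b) * X) * expTrunc N (C a * X) * expTrunc N (C ((2 : ℝ)⁻¹ • b) * X)

noncomputable def strangCorrection (a b : A) : A :=
  (24 : ℝ)⁻¹ • ((2 : ℝ) • ⁅a, ⁅a, b⁆⁆ + ⁅b, ⁅a, b⁆⁆)

theorem X_pow_five_dvd_strangPoly_sub (a b : A) :
    X ^ 5 ∣ strangPoly 5 a b - (expTrunc 5 (C (a + b) * X) + (C (strangCorrection a b) * X ^ 3 +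
      C ((2 : ℝ)⁻¹ • ((a + b) * strangCorrection a b + strangCorrection a b * (a + b))) * X ^ 4)) := by
  rw [X_pow_dvd_iff]
  intro j hj
  rw [coeff_sub, sub_eq_zero, strangPoly]
  simp only [coeff_add, coeff_expTrunc_C_mul_X, coeff_C_mul_X_pow, hj, if_true]
  simp only [coeff_mul, coeff_expTrunc_C_mul_X, Finset.Nat.sum_antidiagonal_eq_sum_range_succ_mk]
  interval_cases j <;>
    simp [Finset.sum_range_succ, Nat.factorial, strangCorrection, Ring.lie_def, pow_succ, mul_add,
      add_mul, smul_add, smul_sub, sub_mul, mul_sub, smul_smul, mul_assoc] <;>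
    match_scalars <;> norm_num

theorem X_pow_five_dvd_strangPoly_sub_expTrunc (a b : A) :
    X ^ 5 ∣ strangPoly 5 a b - expTrunc 5 (C (a + b) * X + C (strangCorrection a b) * X ^ 3) := by
  have := dvd_sub (X_pow_five_dvd_strangPoly_sub a b)
    (X_pow_five_dvd_expTrunc_add_sub (a + b) (strangCorrection a b))
  rwa [sub_sub_sub_cancel_right] at this

theorem X_pow_three_dvd_strangPoly_sub_expTrunc (a b : A) :
    X ^ 3 ∣ strangPoly 5 a b - expTrunc 5 (C (a + b) * X) := by
  set c := strangCorrection a b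
  rw [← sub_add_sub_cancel _ (expTrunc 5 (C (a + b) * X) + (C c * X ^ 3 +
    C ((2 : ℝ)⁻¹ • ((a + b) * c + c * (a + b))) * X ^ 4)), add_sub_cancel_left]
  refine dvd_add ((pow_dvd_pow X (by norm_num : 3 ≤ 5)).trans (X_pow_five_dvd_strangPoly_sub a b))
    (dvd_add ⟨C c, X_pow_mul.symm⟩ ?_)
  exact (pow_dvd_pow X (by norm_num : 3 ≤ 4)).trans ⟨_, X_pow_mul.symm⟩

end Algebra

section Analysis

variable {A : Type*} [NormedRing A] [NormedAlgebra ℝ A]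

theorem continuous_evalReal (p : A[X]) : Continuous fun τ : ℝ => evalReal τ p :=
  (Polynomial.continuous_eval₂ p (RingHom.id A)).comp (continuous_algebraMap ℝ A)

theorem isBigO_pow_pow_of_le {𝕜 : Type*} [NormedDivisionRing 𝕜] {m n : ℕ} (h : m ≤ n) :
    (fun x : 𝕜 => x ^ n) =O[𝓝 0] fun x => x ^ m := by
  rcases h.eq_or_lt with rfl | h
  · exact isBigO_refl _ _
  · exact (isLittleO_pow_pow h).isBigO

theorem isBigO_evalReal_of_X_pow_dvd {N : ℕ} {p : A[X]} (h : X ^ N ∣ p) :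
    (fun τ : ℝ => evalReal τ p) =O[𝓝 0] (· ^ N) := by
  obtain ⟨q, rfl⟩ := h
  have hq : (fun τ : ℝ => evalReal τ q) =O[𝓝 0] fun _ => (1 : ℝ) :=
    ((continuous_evalReal q).tendsto 0).isBigO_one ℝ
  simpa [Algebra.smul_def] using (isBigO_refl (fun τ : ℝ => τ ^ N) (𝓝 0)).smul hq

def AgreesToOrder (N : ℕ) (f : ℝ → A) (p : A[X]) : Prop :=
  (fun τ => f τ - evalReal τ p) =O[𝓝 0] (· ^ N)

namespace AgreesToOrder

variable {N : ℕ} {f g : ℝ → A} {p q : A[X]}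

theorem isBigO_one (h : AgreesToOrder N f p) : f =O[𝓝 0] fun _ => (1 : ℝ) := by
  have hp := ((continuous_evalReal p).tendsto 0).isBigO_one ℝ
  have hN : (fun τ : ℝ => τ ^ N) =O[𝓝 0] fun _ => (1 : ℝ) := by
    simpa using isBigO_pow_pow_of_le (𝕜 := ℝ) (Nat.zero_le N)
  simpa using (h.trans hN).add hp

theorem mul (hf : AgreesToOrder N f p) (hg : AgreesToOrder N g q) :
    AgreesToOrder N (fun τ => f τ * g τ) (p * q) := by
  have hp := ((continuous_evalReal p).tendsto 0).isBigO_one ℝ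
  have h₁ : (fun τ => (f τ - evalReal τ p) * g τ) =O[𝓝 0] (· ^ N) := by
    simpa using IsBigO.mul hf hg.isBigO_one
  have h₂ : (fun τ => evalReal τ p * (g τ - evalReal τ q)) =O[𝓝 0] (· ^ N) := by
    simpa using hp.mul hg
  refine (h₁.add h₂).congr_left fun τ => ?_
  rw [map_mul]
  noncomm_ring

theorem isBigO_sub {M : ℕ} (hf : AgreesToOrder N f p) (hg : AgreesToOrder N g q) (hMN : M ≤ N)
    (hpq : X ^ M ∣ p - q) : (fun τ => f τ - g τ) =O[𝓝 0] (· ^ M) := by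
  refine (((hf.sub hg).trans (isBigO_pow_pow_of_le hMN)).add
    (isBigO_evalReal_of_X_pow_dvd hpq)).congr (fun τ => ?_) fun _ => rfl
  rw [map_sub]; abel

end AgreesToOrder

theorem expSeries_partialSum_eq_expTrunc (N : ℕ) (x : A) :
    (NormedSpace.expSeries ℝ A).partialSum N x = expTrunc N x := by
  simp [FormalMultilinearSeries.partialSum, NormedSpace.expSeries_apply_eq, expTrunc]

variable [CompleteSpace A]

theorem agreesToOrder_exp_evalReal {p : A[X]} (hp : X ∣ p) (N : ℕ) :
    AgreesToOrder N (fun τ => NormedSpace.exp (evalReal τ p)) (expTrunc N p) := by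
  have hx : (fun τ : ℝ => evalReal τ p) =O[𝓝 0] fun τ => τ := by
    simpa using isBigO_evalReal_of_X_pow_dvd (N := 1) (by simpa using hp)
  have hx0 : Tendsto (fun τ : ℝ => evalReal τ p) (𝓝 0) (𝓝 0) := hx.trans_tendsto tendsto_id
  have htaylor := ((NormedSpace.exp_hasFPowerSeriesAt_zero (𝕂 := ℝ) (𝔸 := A)).isBigO_sub_partialSum_pow
    N).comp_tendsto hx0
  simp only [Function.comp_def, zero_add, expSeries_partialSum_eq_expTrunc] at htaylor
  simpa [AgreesToOrder, AlgHom.map_expTrunc] using htaylor.trans (hx.norm_left.pow N)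

theorem agreesToOrder_strang (a b : A) (N : ℕ) :
    AgreesToOrder N
      (fun τ => NormedSpace.exp ((τ / 2) • b) * NormedSpace.exp (τ • a) * NormedSpace.exp ((τ / 2) • b))
      (strangPoly N a b) := by
  have hexp (c : A) : AgreesToOrder N (fun τ => NormedSpace.exp (τ • c)) (expTrunc N (C c * X)) := by
    simpa only [evalReal_C_mul_X] using agreesToOrder_exp_evalReal ⟨C c, X_mul.symm⟩ N
  have hb := hexp ((2 : ℝ)⁻¹ • b)
  simp only [smul_smul, ← div_eq_mul_inv] at hb
  exact (hb.mul (hexp a)).mul hb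

theorem strang_splitting_isBigO (a b : A) :
    ((fun τ : ℝ => NormedSpace.exp ((τ / 2) • b) * NormedSpace.exp (τ • a) *
        NormedSpace.exp ((τ / 2) • b) -
      NormedSpace.exp (τ • (a + b) + (τ ^ 3 / 24) • ((2 : ℝ) • ⁅a, ⁅a, b⁆⁆ + ⁅b, ⁅a, b⁆⁆)))
      =O[𝓝 0] fun τ => τ ^ 5) ∧
    ((fun τ : ℝ => NormedSpace.exp ((τ / 2) • b) * NormedSpace.exp (τ • a) *
        NormedSpace.exp ((τ / 2) • b) - NormedSpace.exp (τ • (a + b)))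
      =O[𝓝 0] fun τ => τ ^ 3) := by
  have hS := agreesToOrder_strang a b 5
  have hG : AgreesToOrder 5
      (fun τ => NormedSpace.exp (τ • (a + b) + (τ ^ 3 / 24) • ((2 : ℝ) • ⁅a, ⁅a, b⁆⁆ + ⁅b, ⁅a, b⁆⁆)))
      (expTrunc 5 (C (a + b) * X + C (strangCorrection a b) * X ^ 3)) := by
    convert agreesToOrder_exp_evalReal (p := C (a + b) * X + C (strangCorrection a b) * X ^ 3)
      (X_dvd_iff.2 (by simp)) 5 using 3 with τ
    rw [map_add, evalReal_C_mul_X, evalReal_C_mul_X_pow, strangCorrection, smul_smul,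
      div_eq_mul_inv]
  have hE : AgreesToOrder 5 (fun τ => NormedSpace.exp (τ • (a + b))) (expTrunc 5 (C (a + b) * X)) := by
    simpa only [evalReal_C_mul_X] using agreesToOrder_exp_evalReal ⟨C (a + b), X_mul.symm⟩ 5
  exact ⟨hS.isBigO_sub hG le_rfl (X_pow_five_dvd_strangPoly_sub_expTrunc a b),
    hS.isBigO_sub hE (by norm_num) (X_pow_three_dvd_strangPoly_sub_expTrunc a b)⟩

end Analysis

section Matrix

attribute [local instance] Matrix.linftyOpNormedAddCommGroup Matrix.linftyOpNormedRing
  Matrix.linftyOpNormedAlgebra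

theorem Matrix.norm_entry_le_linfty_opNorm {m n α : Type*} [Fintype m] [Fintype n]
    [NormedAddCommGroup α] (M : Matrix m n α) (i : m) (j : n) : ‖M i j‖ ≤ ‖M‖ := by
  rw [Matrix.linfty_opNorm_def]
  exact_mod_cast (Finset.single_le_sum (f := fun j => ‖M i j‖₊) (fun _ _ => zero_le)
    (Finset.mem_univ j)).trans (Finset.le_sup (f := fun i => ∑ j, ‖M i j‖₊) (Finset.mem_univ i))

theorem Matrix.strang_splitting_isBigO_apply {m : Type*} [Fintype m] [DecidableEq m]
    (A B : Matrix m m ℝ) (i j : m) :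
    ((fun τ : ℝ => (NormedSpace.exp ((τ / 2) • B) * NormedSpace.exp (τ • A) *
        NormedSpace.exp ((τ / 2) • B) -
      NormedSpace.exp (τ • (A + B) + (τ ^ 3 / 24) • ((2 : ℝ) • ⁅A, ⁅A, B⁆⁆ + ⁅B, ⁅A, B⁆⁆))) i j)
      =O[𝓝 0] fun τ => τ ^ 5) ∧
    ((fun τ : ℝ => (NormedSpace.exp ((τ / 2) • B) * NormedSpace.exp (τ • A) *
        NormedSpace.exp ((τ / 2) • B) - NormedSpace.exp (τ • (A + B))) i j)
      =O[𝓝 0] fun τ => τ ^ 3) := by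
  have hentry {f : ℝ → Matrix m m ℝ} {k : ℕ} (h : f =O[𝓝 0] fun τ => τ ^ k) :
      (fun τ => f τ i j) =O[𝓝 0] fun τ => τ ^ k :=
    (isBigO_of_le _ fun τ => Matrix.norm_entry_le_linfty_opNorm (f τ) i j).trans h
  exact ⟨hentry (strang_splitting_isBigO A B).1, hentry (strang_splitting_isBigO A B).2⟩

end Matrix

attribute [local instance] Matrix.normedAddCommGroup

theorem strang_splitting_matrices (n : ℕ) (A B : Matrix (Fin n) (Fin n) ℝ) :
    ((fun τ : ℝ =>
        NormedSpace.exp ((τ / 2) • B) * NormedSpace.exp (τ • A) *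
            NormedSpace.exp ((τ / 2) • B) -
          NormedSpace.exp (τ • (A + B) +
            (τ ^ 3 / 24) •
              ((2 : ℝ) • (A * (A * B - B * A) - (A * B - B * A) * A) +
                (B * (A * B - B * A) - (A * B - B * A) * B))))
        =O[nhds (0 : ℝ)] fun τ : ℝ => τ ^ 5) ∧
    ((fun τ : ℝ =>
        NormedSpace.exp ((τ / 2) • B) * NormedSpace.exp (τ • A) *
            NormedSpace.exp ((τ / 2) • B) -
          NormedSpace.exp (τ • (A + B)))
        =O[nhds (0 : ℝ)] fun τ : ℝ => τ ^ 3) := by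
  have h := Matrix.strang_splitting_isBigO_apply A B
  simp only [Ring.lie_def] at h
  exact ⟨isBigO_pi.2 fun i => isBigO_pi.2 fun j => (h i j).1,
    isBigO_pi.2 fun i => isBigO_pi.2 fun j => (h i j).2⟩
end

section
/- Let M and K be symmetric n×n real matrices, let A be the 2n×2n block matrix [[0, M],[−K, 0]], and for given n×n matrices M̃ and K̃ define the kick matrix B(c) = [[I, 0],[−c K̃, I]] and the move matrix C(c) = [[I, c M̃],[0, I]]. Then with the τ²-corrected matrices M̃ = M − (τ²/6)·M(KM) and K̃ = K + (τ²/12)·(KM)K, as τ → 0, B(τ/2)·C(τ)·B(τ/2) − exp(τA) = O(τ⁵). -/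
/-!
Both sides are compared with the degree-four Taylor polynomial of `exp (τ • A)`, whose even
powers of `A` are block diagonal, `(-MK)ᵏ ⊕ (-KM)ᵏ`, and odd powers block off-diagonal. The
splitting product is a polynomial in `τ`; the `τ²`-corrections in `K̃` and `M̃` are exactly what
makes its `τ³` and `τ⁴` coefficients agree with those of `exp (τ • A)` (plain Strang splitting
already fails at `τ³`), and what is left over are terms in `τ⁶`, `τ⁷` and `τ⁹`. The exponential is
analytic, so it differs from its Taylor polynomial by `O(τ⁵)`.
-/

open Asymptotics Filter Matrix Topology

namespace Matrix

variable {m R : Type*} [Fintype m] [DecidableEq m] [CommRing R]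

theorem fromBlocks_kick_move_kick (K M : Matrix m m R) (c t : R) :
    fromBlocks 1 0 (-(c • K)) 1 * fromBlocks 1 (t • M) 0 1 * fromBlocks 1 0 (-(c • K)) 1 =
      fromBlocks (1 - (c * t) • (M * K)) (t • M)
        (-((2 * c) • K) + (c ^ 2 * t) • (K * M * K)) (1 - (c * t) • (K * M)) := by
  simp only [fromBlocks_multiply, Matrix.one_mul, Matrix.mul_one, Matrix.mul_zero, add_zero,
    zero_add, Matrix.smul_mul, Matrix.mul_smul, Matrix.neg_mul, Matrix.mul_neg, Matrix.add_mul,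
    smul_smul]
  congr 1 <;> module

theorem fromBlocks_zero_zero_sq (B C : Matrix m m R) :
    fromBlocks 0 B C 0 ^ 2 = fromBlocks (B * C) 0 0 (C * B) := by
  simp [sq, fromBlocks_multiply]

variable {𝕜 : Type*} [Field 𝕜] [CharZero 𝕜]

theorem kick_move_kick_sub_sum_range_five (M K : Matrix m m 𝕜) (τ : 𝕜) :
    fromBlocks 1 0 (-((τ / 2) • (K + (τ ^ 2 / 12) • (K * M * K)))) 1 *
        fromBlocks 1 (τ • (M - (τ ^ 2 / 6) • (M * (K * M)))) 0 1 *
        fromBlocks 1 0 (-((τ / 2) • (K + (τ ^ 2 / 12) • (K * M * K)))) 1 -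
      ∑ k ∈ Finset.range 5, (τ ^ k / k.factorial) • fromBlocks 0 M (-K) 0 ^ k =
      τ ^ 6 • fromBlocks ((144 : 𝕜)⁻¹ • (M * K) ^ 3) 0 0 ((144 : 𝕜)⁻¹ • (K * M) ^ 3) -
        τ ^ 7 • fromBlocks 0 0 ((192 : 𝕜)⁻¹ • ((K * M) ^ 3 * K)) 0 -
        τ ^ 9 • fromBlocks 0 0 ((3456 : 𝕜)⁻¹ • ((K * M) ^ 4 * K)) 0 := by
  have hsq := fromBlocks_zero_zero_sq M (-K)
  have hcube : fromBlocks 0 M (-K) 0 ^ 3 = fromBlocks 0 (M * -K * M) (-K * M * -K) 0 := by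
    rw [pow_succ, hsq, fromBlocks_multiply]
    simp [Matrix.mul_assoc]
  have hfourth : fromBlocks 0 M (-K) 0 ^ 4 = fromBlocks ((M * -K) ^ 2) 0 0 ((-K * M) ^ 2) := by
    rw [show 4 = 2 * 2 from rfl, pow_mul, hsq, sq, fromBlocks_multiply]
    simp [sq]
  rw [fromBlocks_kick_move_kick]
  simp only [Finset.sum_range_succ, Finset.sum_range_zero, hsq, hcube, hfourth]
  norm_num [Nat.factorial]
  rw [← fromBlocks_one]
  simp only [fromBlocks_smul, sub_eq_add_neg, fromBlocks_neg, fromBlocks_add, fromBlocks_inj,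
    smul_zero, neg_zero, add_zero, zero_add]
  refine ⟨?_, ?_, ?_, ?_⟩ <;>
  · simp only [pow_succ, pow_zero, Matrix.one_mul, Matrix.mul_add, Matrix.add_mul,
      Matrix.smul_mul, Matrix.mul_smul, Matrix.neg_mul, Matrix.mul_neg, neg_neg, smul_smul,
      smul_add, smul_neg, neg_add, Matrix.mul_assoc]
    module

end Matrix

theorem isBigO_pow_smul_const {𝕜 E : Type*} [NormedField 𝕜] [SeminormedAddCommGroup E]
    [NormedSpace 𝕜 E] {m n : ℕ} (h : n ≤ m) (x : E) :
    (fun t : 𝕜 => t ^ m • x) =O[𝓝 0] fun t => t ^ n := by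
  have hpow : (fun t : 𝕜 => t ^ m) =O[𝓝 0] fun t => t ^ n := by
    rcases h.eq_or_lt with rfl | hlt
    · exact isBigO_refl _ _
    · exact (isLittleO_pow_pow hlt).isBigO
  exact (IsBigO.of_bound ‖x‖ (.of_forall fun t => (norm_smul_le _ _).trans_eq (mul_comm _ _))).trans
    hpow

theorem NormedSpace.exp_smul_sub_sum_isBigO {𝕂 𝔸 : Type*} [RCLike 𝕂] [NormedRing 𝔸]
    [NormedAlgebra 𝕂 𝔸] [CompleteSpace 𝔸] (x : 𝔸) (N : ℕ) :
    (fun t : 𝕂 => exp (t • x) - ∑ k ∈ Finset.range N, (t ^ k / k.factorial) • x ^ k)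
      =O[𝓝 0] fun t => t ^ N := by
  have htaylor := (exp_hasFPowerSeriesAt_zero (𝕂 := 𝕂) (𝔸 := 𝔸)).isBigO_sub_partialSum_pow N
  have hline : Tendsto (fun t : 𝕂 => t • x) (𝓝 0) (𝓝 0) := by
    simpa using (tendsto_id (x := 𝓝 (0 : 𝕂))).smul_const x
  refine ((htaylor.comp_tendsto hline).congr_left fun t => ?_).trans <|
    .of_bound (‖x‖ ^ N) (.of_forall fun t => ?_)
  · simp [FormalMultilinearSeries.partialSum, expSeries_apply_eq, smul_pow, smul_smul,
      div_eq_inv_mul]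
  · simp [norm_smul, mul_pow, mul_comm]

attribute [local instance] Matrix.normedAddCommGroup Matrix.normedSpace

-- The entrywise norm is not submultiplicative, so the estimate is taken in the
-- `ℓ∞`-operator norm, where `exp` is analytic, and read off entry by entry.
theorem Matrix.exp_smul_sub_sum_isBigO {ι : Type*} [Fintype ι] [DecidableEq ι]
    (X : Matrix ι ι ℝ) (N : ℕ) :
    (fun t : ℝ => NormedSpace.exp (t • X) -
        ∑ k ∈ Finset.range N, (t ^ k / k.factorial) • X ^ k) =O[𝓝 0] fun t => t ^ N := by
  let _ : NormedRing (Matrix ι ι ℝ) := Matrix.linftyOpNormedRing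
  let _ : NormedAlgebra ℝ (Matrix ι ι ℝ) := Matrix.linftyOpNormedAlgebra
  have _ : @CompleteSpace (Matrix ι ι ℝ) Matrix.linftyOpNormedRing.toUniformSpace :=
    FiniteDimensional.complete ℝ _
  refine isBigO_pi.2 fun i => isBigO_pi.2 fun j => ?_
  exact ((LinearMap.toContinuousLinearMap (entryLinearMap ℝ ℝ i j)).isBigO_comp _ _).trans
    (NormedSpace.exp_smul_sub_sum_isBigO X N)

theorem kick_move_kick_quadratic_hamiltonian_order4_general
    (n : ℕ) (M K : Matrix (Fin n) (Fin n) ℝ) :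
    (fun τ : ℝ =>
        Matrix.fromBlocks 1 0
              (-((τ / 2) • (K + (τ ^ 2 / 12) • ((K * M) * K)))) 1 *
            Matrix.fromBlocks 1 (τ • (M - (τ ^ 2 / 6) • (M * (K * M)))) 0 1 *
            Matrix.fromBlocks 1 0
              (-((τ / 2) • (K + (τ ^ 2 / 12) • ((K * M) * K)))) 1 -
          NormedSpace.exp (τ • Matrix.fromBlocks 0 M (-K) 0))
      =O[nhds (0 : ℝ)] fun τ : ℝ => τ ^ 5 := by
  have hexp := Matrix.exp_smul_sub_sum_isBigO (fromBlocks 0 M (-K) 0) 5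
  refine (IsBigO.sub ?_ hexp).congr_left fun τ => sub_sub_sub_cancel_right _ _ _
  simp_rw [kick_move_kick_sub_sum_range_five]
  refine .sub (.sub ?_ ?_) ?_ <;> apply isBigO_pow_smul_const <;> norm_num

theorem kick_move_kick_quadratic_hamiltonian_order4
    (n : ℕ) (M K : Matrix (Fin n) (Fin n) ℝ) (hM : M.IsSymm) (hK : K.IsSymm) :
    (fun τ : ℝ =>
        Matrix.fromBlocks 1 0
              (-((τ / 2) • (K + (τ ^ 2 / 12) • ((K * M) * K)))) 1 *
            Matrix.fromBlocks 1 (τ • (M - (τ ^ 2 / 6) • (M * (K * M)))) 0 1 *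
            Matrix.fromBlocks 1 0
              (-((τ / 2) • (K + (τ ^ 2 / 12) • ((K * M) * K)))) 1 -
          NormedSpace.exp (τ • Matrix.fromBlocks 0 M (-K) 0))
      =O[nhds (0 : ℝ)] fun τ : ℝ => τ ^ 5 :=
  kick_move_kick_quadratic_hamiltonian_order4_general n M K
end

section
/- Let M and K be symmetric n×n real matrices, let A be the 2n×2n block matrix [[0, M],[−K, 0]], and for given n×n matrices M̃ and K̃ define the kick matrix B(c) = [[I, 0],[−c K̃, I]] and the move matrix C(c) = [[I, c M̃],[0, I]]. Then with the τ⁴-corrected matrices M̃ = M − (τ²/6)·M(KM) + (τ⁴/120)·M(KM)² and K̃ = K + (τ²/12)·(KM)K + (τ⁴/120)·(KM)²K, as τ → 0, B(τ/2)·C(τ)·B(τ/2) − exp(τA) = O(τ⁷). -/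
/-!
Compare both matrices with the Taylor polynomial of degree six of `τ ↦ exp (τ • A)`.
Since `A ^ 2 = fromBlocks (-(M * K)) 0 0 (-(K * M))`, every block of that polynomial, and of the
kick–move–kick product, is a polynomial in `M * K` or `K * M` (times `M` or `K`), and the
`τ ^ 2` and `τ ^ 4` corrections in `M̃` and `K̃` make the two agree up to order six. What is left
is `τ ^ 7` times a polynomial in `τ`, while the Taylor tail of the exponential is `O(τ ^ 7)`
because `exp` is analytic.
-/

open Asymptotics Filter Matrix

attribute [local instance] Matrix.normedAddCommGroup

open Finset Nat NormedSpace Topology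

theorem NormedSpace.isBigO_exp_smul_sub_sum {𝕂 𝔸 : Type*} [RCLike 𝕂] [NormedRing 𝔸]
    [NormedAlgebra 𝕂 𝔸] [CompleteSpace 𝔸] (a : 𝔸) (N : ℕ) :
    (fun τ : 𝕂 => exp (τ • a) - ∑ k ∈ range N, (τ ^ k / k !) • a ^ k) =O[𝓝 0] (· ^ N) := by
  have hsmul : Tendsto (fun τ : 𝕂 => τ • a) (𝓝 0) (𝓝 0) := by
    simpa using (tendsto_id.smul_const a : Tendsto (fun τ : 𝕂 => τ • a) (𝓝 0) (𝓝 ((0 : 𝕂) • a)))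
  have htaylor := (exp_hasFPowerSeriesAt_zero (𝕂 := 𝕂) (𝔸 := 𝔸)).isBigO_sub_partialSum_pow N
  refine ((htaylor.comp_tendsto hsmul).congr_left fun τ => ?_).trans ?_
  · simp [FormalMultilinearSeries.partialSum, expSeries_apply_eq, smul_pow, smul_smul,
      div_eq_inv_mul]
  · refine .of_bound (‖a‖ ^ N) (Eventually.of_forall fun τ => ?_)
    simp [norm_smul, mul_pow, mul_comm]

-- The entrywise sup norm is not submultiplicative, so we pass through the `L^∞` operator norm.
theorem Matrix.isBigO_exp_smul_sub_sum {ι : Type*} [Fintype ι] [DecidableEq ι]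
    (A : Matrix ι ι ℝ) (N : ℕ) :
    (fun τ : ℝ => exp (τ • A) - ∑ k ∈ range N, (τ ^ k / k !) • A ^ k) =O[𝓝 0] (· ^ N) := by
  set E := fun τ : ℝ => exp (τ • A) - ∑ k ∈ range N, (τ ^ k / k !) • A ^ k
  obtain ⟨c, hc0, hc⟩ : ∃ c, 0 ≤ c ∧ ∀ᶠ τ in 𝓝 0, ∀ i j, ‖E τ i j‖ ≤ c * ‖τ ^ N‖ := by
    let _ : NormedAddCommGroup (Matrix ι ι ℝ) := Matrix.linftyOpNormedAddCommGroup
    let _ : NormedSpace ℝ (Matrix ι ι ℝ) := Matrix.linftyOpNormedSpace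
    have : CompleteSpace (Matrix ι ι ℝ) := FiniteDimensional.complete ℝ _
    let _ : NormedRing (Matrix ι ι ℝ) := Matrix.linftyOpNormedRing
    let _ : NormedAlgebra ℝ (Matrix ι ι ℝ) := Matrix.linftyOpNormedAlgebra
    obtain ⟨c, hc0, hc⟩ := (NormedSpace.isBigO_exp_smul_sub_sum (𝕂 := ℝ) A N).exists_pos
    refine ⟨c, hc0.le, hc.bound.mono fun τ hτ i j => le_trans ?_ hτ⟩
    rw [linfty_opNorm_def]
    exact_mod_cast (single_le_sum (f := fun j => ‖E τ i j‖₊) (fun _ _ => zero_le) (mem_univ j)).trans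
      (le_sup (f := fun i => ∑ j, ‖E τ i j‖₊) (mem_univ i))
  exact .of_bound c (hc.mono fun τ hτ => (Matrix.norm_le_iff (by positivity)).2 hτ)

namespace Matrix

variable {m n α : Type*} [Fintype m] [Fintype n] [DecidableEq m] [DecidableEq n]

theorem fromBlocks_kick_move_kick_s7 [Ring α] (P : Matrix n m α) (Q : Matrix m n α) :
    fromBlocks 1 0 (-P) 1 * fromBlocks 1 Q 0 1 * fromBlocks 1 0 (-P) 1
      = fromBlocks (1 - Q * P) Q (P * Q * P - 2 • P) (1 - P * Q) := by
  simp only [fromBlocks_multiply, Matrix.mul_one, Matrix.one_mul, Matrix.mul_zero,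
    add_zero, zero_add, Matrix.mul_neg, Matrix.neg_mul, Matrix.add_mul]
  congr 1 <;> abel

theorem fromBlocks_zero_zero_sq_s7 [Ring α] (M : Matrix m n α) (K : Matrix n m α) :
    fromBlocks 0 M (-K) 0 ^ 2 = fromBlocks (-(M * K)) 0 0 (-(K * M)) := by
  simp [sq, fromBlocks_multiply]

theorem fromBlocks_zero_zero_pow_even [Ring α] (M : Matrix m n α) (K : Matrix n m α) (k : ℕ) :
    fromBlocks 0 M (-K) 0 ^ (2 * k) = fromBlocks ((-(M * K)) ^ k) 0 0 ((-(K * M)) ^ k) := by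
  rw [pow_mul, fromBlocks_zero_zero_sq_s7, fromBlocks_diagonal_pow]

theorem fromBlocks_zero_zero_pow_odd [Ring α] (M : Matrix m n α) (K : Matrix n m α) (k : ℕ) :
    fromBlocks 0 M (-K) 0 ^ (2 * k + 1)
      = fromBlocks 0 ((-(M * K)) ^ k * M) (-((-(K * M)) ^ k * K)) 0 := by
  simp [pow_succ, fromBlocks_zero_zero_pow_even, fromBlocks_multiply]

theorem sum_range_seven_smul_fromBlocks_zero_zero_pow (M : Matrix m n ℝ) (K : Matrix n m ℝ)
    (τ : ℝ) :
    ∑ k ∈ range 7, (τ ^ k / k !) • fromBlocks 0 M (-K) 0 ^ k =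
      fromBlocks
        (1 - (τ ^ 2 / 2) • (M * K) + (τ ^ 4 / 24) • (M * K) ^ 2 - (τ ^ 6 / 720) • (M * K) ^ 3)
        (τ • M - (τ ^ 3 / 6) • (M * K * M) + (τ ^ 5 / 120) • ((M * K) ^ 2 * M))
        (-(τ • K - (τ ^ 3 / 6) • (K * M * K) + (τ ^ 5 / 120) • ((K * M) ^ 2 * K)))
        (1 - (τ ^ 2 / 2) • (K * M) + (τ ^ 4 / 24) • (K * M) ^ 2 - (τ ^ 6 / 720) • (K * M) ^ 3) := by
  set J := fromBlocks 0 M (-K) 0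
  have even := fromBlocks_zero_zero_pow_even M K
  have odd := fromBlocks_zero_zero_pow_odd M K
  simp only [sum_range_succ, sum_range_zero, zero_add]
  rw [(even 0 : J ^ 0 = _), (odd 0 : J ^ 1 = _), (even 1 : J ^ 2 = _), (odd 1 : J ^ 3 = _),
    (even 2 : J ^ 4 = _), (odd 2 : J ^ 5 = _), (even 3 : J ^ 6 = _)]
  simp only [fromBlocks_smul, fromBlocks_add]
  congr 1
  all_goals simp [factorial, pow_succ, sub_eq_add_neg]
  all_goals module

theorem exists_continuous_kick_move_kick_eq_sum_add (M : Matrix m n ℝ) (K : Matrix n m ℝ) :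
    ∃ R : ℝ → Matrix (m ⊕ n) (m ⊕ n) ℝ, Continuous R ∧ ∀ τ : ℝ,
      fromBlocks 1 0
            (-((τ / 2) • (K + (τ ^ 2 / 12) • ((K * M) * K)
                + (τ ^ 4 / 120) • ((K * M) * (K * M) * K)))) 1 *
          fromBlocks 1
            (τ • (M - (τ ^ 2 / 6) • (M * (K * M))
                + (τ ^ 4 / 120) • (M * ((K * M) * (K * M))))) 0 1 *
          fromBlocks 1 0
            (-((τ / 2) • (K + (τ ^ 2 / 12) • ((K * M) * K)
                + (τ ^ 4 / 120) • ((K * M) * (K * M) * K)))) 1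
        = ∑ k ∈ range 7, (τ ^ k / k !) • fromBlocks 0 M (-K) 0 ^ k + τ ^ 7 • R τ := by
  -- The `τ ^ 7` part of the blocks of `fromBlocks_kick_move_kick`; the upper right block of the
  -- product is exactly the truncated sine series.
  refine ⟨fun τ => fromBlocks
      ((τ / 2880) • (M * K) ^ 4 - (τ ^ 3 / 28800) • (M * K) ^ 5) 0
      ((1 / 960 : ℝ) • ((K * M) ^ 3 * K) - (τ ^ 2 / 3456) • ((K * M) ^ 4 * K)
        + (τ ^ 4 / 115200) • ((K * M) ^ 5 * K) + (τ ^ 8 / 6912000) • ((K * M) ^ 7 * K))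
      ((τ / 2880) • (K * M) ^ 4 - (τ ^ 3 / 28800) • (K * M) ^ 5),
    Continuous.matrix_fromBlocks (by fun_prop) continuous_const (by fun_prop) (by fun_prop),
    fun τ => ?_⟩
  rw [fromBlocks_kick_move_kick_s7, sum_range_seven_smul_fromBlocks_zero_zero_pow, fromBlocks_smul,
    fromBlocks_add]
  congr 1 <;>
  · simp only [Matrix.mul_add, Matrix.add_mul, Matrix.mul_sub, Matrix.sub_mul, Matrix.smul_mul,
      Matrix.mul_smul, smul_smul, pow_succ, pow_zero, Matrix.one_mul, Matrix.mul_assoc,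
      smul_add, smul_sub, two_smul]
    module

end Matrix

attribute [local instance] Matrix.normedSpace

theorem kick_move_kick_quadratic_hamiltonian_order6_general
    (n : ℕ) (M K : Matrix (Fin n) (Fin n) ℝ) :
    (fun τ : ℝ =>
        Matrix.fromBlocks 1 0
              (-((τ / 2) • (K + (τ ^ 2 / 12) • ((K * M) * K)
                  + (τ ^ 4 / 120) • ((K * M) * (K * M) * K)))) 1 *
            Matrix.fromBlocks 1
              (τ • (M - (τ ^ 2 / 6) • (M * (K * M))
                  + (τ ^ 4 / 120) • (M * ((K * M) * (K * M))))) 0 1 *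
            Matrix.fromBlocks 1 0
              (-((τ / 2) • (K + (τ ^ 2 / 12) • ((K * M) * K)
                  + (τ ^ 4 / 120) • ((K * M) * (K * M) * K)))) 1 -
          NormedSpace.exp (τ • Matrix.fromBlocks 0 M (-K) 0))
      =O[nhds (0 : ℝ)] fun τ : ℝ => τ ^ 7 := by
  obtain ⟨R, hR, hproduct⟩ := exists_continuous_kick_move_kick_eq_sum_add M K
  have hremainder : (fun τ : ℝ => τ ^ 7 • R τ) =O[𝓝 0] (· ^ 7) :=
    ((isBigO_refl (· ^ 7) (𝓝 (0 : ℝ))).smul ((hR.tendsto 0).isBigO_one ℝ)).congr_right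
      fun τ => mul_one (τ ^ 7)
  refine (hremainder.sub (Matrix.isBigO_exp_smul_sub_sum (fromBlocks 0 M (-K) 0) 7)).congr_left
    fun τ => ?_
  rw [hproduct]
  abel

theorem kick_move_kick_quadratic_hamiltonian_order6
    (n : ℕ) (M K : Matrix (Fin n) (Fin n) ℝ) (hM : M.IsSymm) (hK : K.IsSymm) :
    (fun τ : ℝ =>
        Matrix.fromBlocks 1 0
              (-((τ / 2) • (K + (τ ^ 2 / 12) • ((K * M) * K)
                  + (τ ^ 4 / 120) • ((K * M) * (K * M) * K)))) 1 *
            Matrix.fromBlocks 1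
              (τ • (M - (τ ^ 2 / 6) • (M * (K * M))
                  + (τ ^ 4 / 120) • (M * ((K * M) * (K * M))))) 0 1 *
            Matrix.fromBlocks 1 0
              (-((τ / 2) • (K + (τ ^ 2 / 12) • ((K * M) * K)
                  + (τ ^ 4 / 120) • ((K * M) * (K * M) * K)))) 1 -
          NormedSpace.exp (τ • Matrix.fromBlocks 0 M (-K) 0))
      =O[nhds (0 : ℝ)] fun τ : ℝ => τ ^ 7 :=
  kick_move_kick_quadratic_hamiltonian_order6_general n M K
end

section
/- Let ℓ ≥ 2 be an integer and let x₀, x₁ be real numbers satisfying x₀ + 2x₁ = 1 and x₀^ℓ + 2x₁^ℓ = 0. Then x₀ < 0 or x₁ < 0. (I.e., the Yoshida order-raising conditions for a symmetric triple composition have real solutions only if at least one of the substep coefficients is negative.) -/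
theorem yoshida_coefficients_negative
    (ℓ : ℕ) (hℓ : 2 ≤ ℓ) (x₀ x₁ : ℝ)
    (h1 : x₀ + 2 * x₁ = 1) (h2 : x₀ ^ ℓ + 2 * x₁ ^ ℓ = 0) :
    x₀ < 0 ∨ x₁ < 0 := by
  by_contra h
  push_neg at h
  obtain ⟨h0, h1'⟩ := h
  have hne : ℓ ≠ 0 := by omega
  have p0 : (0:ℝ) ≤ x₀ ^ ℓ := pow_nonneg h0 ℓ
  have p1 : (0:ℝ) ≤ x₁ ^ ℓ := pow_nonneg h1' ℓ
  have e0 : x₀ ^ ℓ = 0 := by linarith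
  have e1 : x₁ ^ ℓ = 0 := by linarith
  have : x₀ = 0 := pow_eq_zero_iff hne |>.mp e0
  have : x₁ = 0 := pow_eq_zero_iff hne |>.mp e1
  linarith
end

section
/- Let T and V be n×n complex matrices and t ∈ ℝ. Then lim_{n→∞} ( exp(−i T t/n) · exp(−i V t/n) )ⁿ = exp(−i(T+V)t), where exp denotes the matrix exponential. (The Trotter–Lie product formula underlying splitting schemes.) -/
/-!
With `p = exp (X/k) * exp (Y/k)` and `q = exp ((X+Y)/k)` we have `q ^ k = exp (X + Y)`.
Comparing second-order Taylor remainders gives `‖p - q‖ ≤ 2 (s/k)² e^{s/k}` with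
`s = ‖X‖ + ‖Y‖`, while `‖p‖, ‖q‖ ≤ e^{s/k}`. Telescoping
`p^k - q^k = ∑ p^j (p - q) q^(k-1-j)` then yields `‖p^k - q^k‖ ≤ 2 s² e^s / k → 0`.
-/

open Filter NormedSpace
open scoped Nat

theorem Real.hasSum_pow_div_factorial (r : ℝ) :
    HasSum (fun n : ℕ => r ^ n / n !) (Real.exp r) := by
  rw [Real.exp_eq_exp_ℝ]
  exact expSeries_div_hasSum_exp r

section

variable {A : Type*} [NormedRing A] [NormOneClass A]

theorem norm_pow_sub_pow_le {p q : A} {M : ℝ} (hp : ‖p‖ ≤ M) (hq : ‖q‖ ≤ M) (k : ℕ) :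
    ‖p ^ k - q ^ k‖ ≤ k * M ^ (k - 1) * ‖p - q‖ := by
  induction k with
  | zero => simp
  | succ k ih =>
    have hM : 0 ≤ M := (norm_nonneg p).trans hp
    have htelescope : p ^ (k + 1) - q ^ (k + 1) = p ^ k * (p - q) + (p ^ k - q ^ k) * q := by
      noncomm_ring
    have hpk : ‖p ^ k‖ ≤ M ^ k := (norm_pow_le p k).trans (pow_le_pow_left₀ (norm_nonneg p) hp k)
    have hMk : (k : ℝ) * M ^ (k - 1) * M = k * M ^ k := by
      rcases Nat.eq_zero_or_pos k with rfl | hk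
      · simp
      · rw [mul_assoc, pow_sub_one_mul hk.ne']
    calc ‖p ^ (k + 1) - q ^ (k + 1)‖
        ≤ ‖p ^ k‖ * ‖p - q‖ + ‖p ^ k - q ^ k‖ * ‖q‖ := by
          rw [htelescope]
          exact (norm_add_le _ _).trans (add_le_add (norm_mul_le _ _) (norm_mul_le _ _))
      _ ≤ M ^ k * ‖p - q‖ + k * M ^ (k - 1) * ‖p - q‖ * M := by gcongr
      _ = (k + 1 : ℕ) * M ^ (k + 1 - 1) * ‖p - q‖ := by
          rw [mul_right_comm _ ‖p - q‖, hMk]; push_cast; ring_nf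

variable [NormedAlgebra ℚ A]

theorem norm_inv_factorial_smul_pow_le (x : A) (n : ℕ) :
    ‖(n !⁻¹ : ℚ) • x ^ n‖ ≤ ‖x‖ ^ n / n ! := by
  rw [norm_smul, ← Rat.norm_cast_real, div_eq_inv_mul]
  push_cast
  rw [norm_inv, Real.norm_natCast]
  gcongr
  exact norm_pow_le x n

variable [CompleteSpace A]

theorem norm_exp_le_exp_norm (x : A) : ‖exp x‖ ≤ Real.exp ‖x‖ :=
  (exp_series_hasSum_exp' x).norm_le_of_bounded (Real.hasSum_pow_div_factorial ‖x‖)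
    (norm_inv_factorial_smul_pow_le x)

theorem norm_exp_mul_exp_le (x y : A) : ‖exp x * exp y‖ ≤ Real.exp (‖x‖ + ‖y‖) := by
  rw [Real.exp_add]
  exact (norm_mul_le _ _).trans (by gcongr <;> exact norm_exp_le_exp_norm _)

theorem norm_exp_sub_one_sub_le (x : A) : ‖exp x - 1 - x‖ ≤ ‖x‖ ^ 2 * Real.exp ‖x‖ := by
  have htail : HasSum (fun n : ℕ => ((n + 2)! ⁻¹ : ℚ) • x ^ (n + 2)) (exp x - 1 - x) := by
    have := (hasSum_nat_add_iff' 2).mpr (exp_series_hasSum_exp' (𝕂 := ℚ) x)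
    simpa [Finset.sum_range_succ, sub_sub] using this
  refine htail.norm_le_of_bounded
    ((Real.hasSum_pow_div_factorial ‖x‖).mul_left (‖x‖ ^ 2)) fun n => ?_
  calc ‖((n + 2)! ⁻¹ : ℚ) • x ^ (n + 2)‖ ≤ ‖x‖ ^ (n + 2) / (n + 2)! :=
        norm_inv_factorial_smul_pow_le x (n + 2)
    _ ≤ ‖x‖ ^ (n + 2) / n ! := by gcongr; exact Nat.le_add_right n 2
    _ = ‖x‖ ^ 2 * (‖x‖ ^ n / n !) := by ring

theorem norm_exp_mul_exp_sub_exp_add_le (x y : A) :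
    ‖exp x * exp y - exp (x + y)‖ ≤ 2 * (‖x‖ + ‖y‖) ^ 2 * Real.exp (‖x‖ + ‖y‖) := by
  set a := ‖x‖
  set b := ‖y‖
  have ha : 0 ≤ a := norm_nonneg x
  have hb : 0 ≤ b := norm_nonneg y
  have hsplit : exp x * exp y - exp (x + y) = (exp x - 1 - x) * exp y
      + (1 + x) * (exp y - 1 - y) + x * y - (exp (x + y) - 1 - (x + y)) := by
    noncomm_ring
  have h1 : ‖(exp x - 1 - x) * exp y‖ ≤ a ^ 2 * Real.exp (a + b) := by
    rw [Real.exp_add, ← mul_assoc]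
    refine (norm_mul_le _ _).trans ?_
    gcongr
    exacts [norm_exp_sub_one_sub_le x, norm_exp_le_exp_norm y]
  have h2 : ‖(1 + x) * (exp y - 1 - y)‖ ≤ b ^ 2 * Real.exp (a + b) := by
    have h1x : ‖1 + x‖ ≤ Real.exp a :=
      (norm_add_le _ _).trans (by rw [norm_one, add_comm]; exact Real.add_one_le_exp a)
    rw [Real.exp_add, mul_left_comm]
    exact (norm_mul_le _ _).trans (by gcongr; exact norm_exp_sub_one_sub_le y)
  have h3 : ‖x * y‖ ≤ a * b * Real.exp (a + b) :=
    (norm_mul_le x y).trans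
      (le_mul_of_one_le_right (by positivity) (Real.one_le_exp (by positivity)))
  have h4 : ‖exp (x + y) - 1 - (x + y)‖ ≤ (a + b) ^ 2 * Real.exp (a + b) :=
    (norm_exp_sub_one_sub_le _).trans (by gcongr <;> exact norm_add_le x y)
  rw [hsplit]
  refine (norm_sub_le _ _).trans
    ((add_le_add (norm_add₃_le.trans (add_le_add_three h1 h2 h3)) h4).trans ?_)
  have hsq : a ^ 2 + b ^ 2 + a * b ≤ (a + b) ^ 2 := by nlinarith
  nlinarith [Real.exp_pos (a + b)]

end

theorem tendsto_exp_inv_smul_mul_exp_inv_smul_pow {𝕂 A : Type*} [RCLike 𝕂] [NormedRing A]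
    [NormOneClass A] [NormedAlgebra 𝕂 A] [CompleteSpace A] (X Y : A) :
    Tendsto (fun k : ℕ => (exp ((k : 𝕂)⁻¹ • X) * exp ((k : 𝕂)⁻¹ • Y)) ^ k) atTop
      (nhds (exp (X + Y))) := by
  let : NormedAlgebra ℚ A := NormedAlgebra.restrictScalars ℚ 𝕂 A
  set s := ‖X‖ + ‖Y‖
  rw [← tendsto_sub_nhds_zero_iff]
  refine squeeze_zero_norm' ?_ (tendsto_const_div_atTop_nhds_zero_nat (2 * s ^ 2 * Real.exp s))
  filter_upwards [eventually_ge_atTop 1] with k hk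
  have hk0 : (k : ℝ) ≠ 0 := by positivity
  set x := (k : 𝕂)⁻¹ • X
  set y := (k : 𝕂)⁻¹ • Y
  have hxy : ‖x‖ + ‖y‖ = s / k := by
    simp only [x, y, norm_smul, norm_inv, RCLike.norm_natCast]
    ring
  have hpow : exp (x + y) ^ k = exp (X + Y) := by
    rw [← exp_nsmul, ← smul_add, ← Nat.cast_smul_eq_nsmul 𝕂, smul_smul,
      mul_inv_cancel₀ (by exact_mod_cast hk0), one_smul]
  have hM : Real.exp (s / k) ^ k = Real.exp s := by
    rw [← Real.exp_nat_mul, mul_div_cancel₀ _ hk0]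
  calc ‖(exp x * exp y) ^ k - exp (X + Y)‖
      = ‖(exp x * exp y) ^ k - exp (x + y) ^ k‖ := by rw [hpow]
    _ ≤ k * Real.exp (s / k) ^ (k - 1) * (2 * (s / k) ^ 2 * Real.exp (s / k)) := by
        rw [← hxy]
        refine norm_pow_sub_pow_le (norm_exp_mul_exp_le x y)
          ((norm_exp_le_exp_norm _).trans (Real.exp_le_exp.mpr (norm_add_le x y))) k |>.trans ?_
        gcongr
        exact norm_exp_mul_exp_sub_exp_add_le x y
    _ = 2 * s ^ 2 * Real.exp s / k := by
        rw [← hM, ← pow_sub_one_mul (by omega : k ≠ 0)]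
        field_simp

theorem trotter_product_formula_matrices
    (d : ℕ) (T V : Matrix (Fin d) (Fin d) ℂ) (t : ℝ) :
    Tendsto
      (fun k : ℕ =>
        (NormedSpace.exp ((-(Complex.I * t / k)) • T) *
            NormedSpace.exp ((-(Complex.I * t / k)) • V)) ^ k)
      atTop
      (nhds (NormedSpace.exp ((-(Complex.I * t)) • (T + V)))) := by
  -- the ℓ∞ operator norm satisfies `‖1‖ = 1` only for a nonempty index type
  cases isEmpty_or_nonempty (Fin d)
  · exact tendsto_const_nhds.congr fun k => Subsingleton.elim _ _
  let : NormedRing (Matrix (Fin d) (Fin d) ℂ) := Matrix.linftyOpNormedRing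
  let : NormedAlgebra ℂ (Matrix (Fin d) (Fin d) ℂ) := Matrix.linftyOpNormedAlgebra
  have : NormOneClass (Matrix (Fin d) (Fin d) ℂ) := Matrix.linfty_opNormOneClass
  have hscale (k : ℕ) (M : Matrix (Fin d) (Fin d) ℂ) :
      (k : ℂ)⁻¹ • (-(Complex.I * t)) • M = (-(Complex.I * t / k)) • M := by
    rw [smul_smul, inv_mul_eq_div, neg_div]
  have h := tendsto_exp_inv_smul_mul_exp_inv_smul_pow (𝕂 := ℂ)
    (-(Complex.I * t) • T) (-(Complex.I * t) • V)
  simp only [← smul_add, hscale] at h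
  exact h
end
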